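/- arXiv:math/0007171 — 3 statements merged into one kernel-verified Lean document; each statement's English description precedes it below -/
import Mathlib

section
/- Let Q = ((a,b),(b,c)) be a positive definite even binary quadratic form with 0 ≤ 2b ≤ a ≤ c. Then the fiber of the natural projection from SL_2(Z)-orbits to GL_2(Z)-orbits over the orbit of Q has cardinality 2 if 0 < 2b < a < c, and cardinality 1 otherwise. -/
/-!
The `GL₂(ℤ)`-class of `Q` contains at most two `SL₂(ℤ)`-classes: those of `Q` and of its mirror
image `εᵀ Q ε = ((a, -b), (-b, c))`, `ε = diag(1, -1)`, since `ε g` has determinant `1` whenever `g`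
has determinant `-1`. So the fiber has one or two elements according as `Q` and its mirror image
are `SL₂(ℤ)`-equivalent or not. On the boundary `b = 0`, `2b = a`, `a = c` of the reduced domain
an explicit matrix of determinant `1` carries `Q` to its mirror image. In the interior, such a
`g ∈ SL₂(ℤ)` represents `a = Q(g₀₀, g₁₀)`; as `Q(x, y) ≥ c > a` for `y ≠ 0`, this forces
`g₁₀ = 0`, so `g = ±((1, q), (0, 1))`, and the off-diagonal entry gives `a ∣ 2b`, impossible for
`0 < 2b < a`.
-/

open Matrix

/-- `SL₂(ℤ)`-equivalence of integer matrices under `Q ↦ gᵀ Q g`. -/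
def SLEquiv (Q Q' : Matrix (Fin 2) (Fin 2) ℤ) : Prop :=
  ∃ g : Matrix (Fin 2) (Fin 2) ℤ, g.det = 1 ∧ g.transpose * Q * g = Q'

/-- `GL₂(ℤ)`-equivalence of integer matrices under `Q ↦ gᵀ Q g`. -/
def GLEquiv (Q Q' : Matrix (Fin 2) (Fin 2) ℤ) : Prop :=
  ∃ g : Matrix (Fin 2) (Fin 2) ℤ, IsUnit g.det ∧ g.transpose * Q * g = Q'

lemma Matrix.transpose_mul_mul_mul_mul {n R : Type*} [Fintype n] [CommRing R]
    (Q g h : Matrix n n R) : (g * h)ᵀ * Q * (g * h) = hᵀ * (gᵀ * Q * g) * h := by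
  simp only [transpose_mul, Matrix.mul_assoc]

lemma transpose_mul_mul_fin_two (a b c p q r s : ℤ) :
    !![p, q; r, s]ᵀ * !![a, b; b, c] * !![p, q; r, s] =
      !![a * p ^ 2 + 2 * b * p * r + c * r ^ 2, a * p * q + b * (p * s + q * r) + c * r * s;
         a * p * q + b * (p * s + q * r) + c * r * s, a * q ^ 2 + 2 * b * q * s + c * s ^ 2] := by
  ext i j
  fin_cases i <;> fin_cases j <;> simp [Matrix.mul_apply, Fin.sum_univ_two] <;> ring

namespace SLEquiv

variable {Q Q' Q'' : Matrix (Fin 2) (Fin 2) ℤ}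

lemma refl (Q : Matrix (Fin 2) (Fin 2) ℤ) : SLEquiv Q Q :=
  ⟨1, det_one, by simp⟩

lemma symm : SLEquiv Q Q' → SLEquiv Q' Q := by
  rintro ⟨g, hg, rfl⟩
  have hinv : g * g⁻¹ = 1 := mul_nonsing_inv g (hg ▸ isUnit_one)
  refine ⟨g⁻¹, by rw [det_nonsing_inv, hg, Ring.inverse_one], ?_⟩
  rw [← transpose_mul_mul_mul_mul, hinv]
  simp

lemma trans : SLEquiv Q Q' → SLEquiv Q' Q'' → SLEquiv Q Q'' := by
  rintro ⟨g, hg, rfl⟩ ⟨h, hh, rfl⟩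
  exact ⟨g * h, by rw [det_mul, hg, hh, one_mul], transpose_mul_mul_mul_mul Q g h⟩

lemma equivalence : Equivalence SLEquiv :=
  ⟨refl, symm, trans⟩

lemma glEquiv : SLEquiv Q Q' → GLEquiv Q Q' := by
  rintro ⟨g, hg, hQ'⟩
  exact ⟨g, hg ▸ isUnit_one, hQ'⟩

end SLEquiv

def reflectionMatrix : Matrix (Fin 2) (Fin 2) ℤ := !![1, 0; 0, -1]

lemma det_reflectionMatrix : reflectionMatrix.det = -1 := by
  simp [reflectionMatrix, det_fin_two_of]

lemma transpose_reflectionMatrix_mul_mul_reflectionMatrix (a b c : ℤ) :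
    reflectionMatrixᵀ * !![a, b; b, c] * reflectionMatrix = !![a, -b; -b, c] := by
  rw [reflectionMatrix, transpose_mul_mul_fin_two]
  norm_num

lemma glEquiv_transpose_reflectionMatrix_mul_mul (Q : Matrix (Fin 2) (Fin 2) ℤ) :
    GLEquiv Q (reflectionMatrixᵀ * Q * reflectionMatrix) :=
  ⟨_, by rw [det_reflectionMatrix]; exact isUnit_one.neg, rfl⟩

lemma GLEquiv.slEquiv_or_slEquiv {Q Q' : Matrix (Fin 2) (Fin 2) ℤ} :
    GLEquiv Q Q' → SLEquiv Q Q' ∨ SLEquiv (reflectionMatrixᵀ * Q * reflectionMatrix) Q' := by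
  rintro ⟨g, hg, rfl⟩
  rcases Int.isUnit_iff.mp hg with hg | hg
  · exact .inl ⟨g, hg, rfl⟩
  · have hsq : reflectionMatrix * reflectionMatrix = 1 := by
      simp [reflectionMatrix, ← Matrix.ext_iff, Fin.forall_fin_two]
    refine .inr ⟨reflectionMatrix * g, by rw [det_mul, det_reflectionMatrix, hg]; norm_num, ?_⟩
    rw [transpose_mul_mul_mul_mul, ← transpose_mul_mul_mul_mul Q, hsq]
    simp

def GLFiber (Q : Matrix (Fin 2) (Fin 2) ℤ) : Type :=
  Quot (fun x y : {Q' : Matrix (Fin 2) (Fin 2) ℤ // GLEquiv Q Q'} => SLEquiv x.1 y.1)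

namespace GLFiber

variable {Q : Matrix (Fin 2) (Fin 2) ℤ}

def mk (Q' : Matrix (Fin 2) (Fin 2) ℤ) (h : GLEquiv Q Q') : GLFiber Q :=
  Quot.mk _ ⟨Q', h⟩

lemma mk_eq_mk_iff {Q' Q'' : Matrix (Fin 2) (Fin 2) ℤ} {h' : GLEquiv Q Q'} {h'' : GLEquiv Q Q''} :
    mk Q' h' = mk Q'' h'' ↔ SLEquiv Q' Q'' :=
  (SLEquiv.equivalence.comap Subtype.val).quot_mk_eq_iff _ _

lemma eq_mk_self_or_eq_mk_reflect (z : GLFiber Q) :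
    z = mk Q (SLEquiv.refl Q).glEquiv ∨
      z = mk _ (glEquiv_transpose_reflectionMatrix_mul_mul Q) := by
  induction z using Quot.ind with
  | mk x => exact x.2.slEquiv_or_slEquiv.imp (mk_eq_mk_iff.2 ·.symm) (mk_eq_mk_iff.2 ·.symm)

lemma card_eq_one (h : SLEquiv Q (reflectionMatrixᵀ * Q * reflectionMatrix)) :
    Nat.card (GLFiber Q) = 1 :=
  Nat.card_eq_one_iff_exists.2 ⟨_, fun z =>
    (eq_mk_self_or_eq_mk_reflect z).elim id (·.trans (mk_eq_mk_iff.2 h.symm))⟩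

lemma card_eq_two (h : ¬SLEquiv Q (reflectionMatrixᵀ * Q * reflectionMatrix)) :
    Nat.card (GLFiber Q) = 2 :=
  Nat.card_eq_two_iff.2 ⟨_, _, mt mk_eq_mk_iff.1 h,
    Set.eq_univ_of_forall eq_mk_self_or_eq_mk_reflect⟩

end GLFiber

lemma le_form_of_ne_zero {a b c p r : ℤ} (hb : 0 ≤ b) (hba : 2 * b ≤ a) (hbc : b ≤ c) (hr : r ≠ 0) :
    c ≤ a * p ^ 2 + 2 * b * p * r + c * r ^ 2 := by
  have hr2 : 0 < r ^ 2 := by positivity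
  rcases eq_or_ne p 0 with rfl | hp
  · nlinarith
  · have hp2 : 0 < p ^ 2 := by positivity
    -- the form equals `b (p + r)² + (a - b) p² + (c - b) r²`, all three coefficients being `≥ 0`
    nlinarith [mul_nonneg hb (sq_nonneg (p + r)),
      mul_le_mul_of_nonneg_left (show 1 ≤ p ^ 2 by omega) (show 0 ≤ a - b by omega),
      mul_le_mul_of_nonneg_left (show 1 ≤ r ^ 2 by omega) (show 0 ≤ c - b by omega)]

lemma not_slEquiv_neg {a b c : ℤ} (hb : 0 < 2 * b) (hba : 2 * b < a) (hac : a < c) :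
    ¬SLEquiv !![a, b; b, c] !![a, -b; -b, c] := by
  rintro ⟨g, hg, he⟩
  obtain ⟨p, q, r, s, rfl⟩ : ∃ p q r s, g = !![p, q; r, s] := ⟨_, _, _, _, eta_fin_two g⟩
  rw [det_fin_two_of] at hg
  rw [transpose_mul_mul_fin_two] at he
  have E00 := congrFun (congrFun he 0) 0
  have E01 := congrFun (congrFun he 0) 1
  simp only [of_apply, cons_val', cons_val_zero, cons_val_fin_one, cons_val_one] at E00 E01
  have hr : r = 0 := by
    by_contra hr
    linarith [le_form_of_ne_zero (p := p) (show 0 ≤ b by omega) hba.le (show b ≤ c by omega) hr]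
  subst hr
  have had : a ∣ 2 * b := ⟨-(p * q), by linear_combination E01 - b * hg⟩
  linarith [Int.le_of_dvd hb had]

lemma slEquiv_neg_of_boundary {a b c : ℤ} (h : b = 0 ∨ a = 2 * b ∨ a = c) :
    SLEquiv !![a, b; b, c] !![a, -b; -b, c] := by
  rcases h with rfl | rfl | rfl
  · simpa using SLEquiv.refl _
  · refine ⟨!![1, -1; 0, 1], by simp [det_fin_two_of], ?_⟩
    rw [transpose_mul_mul_fin_two]
    ext i j; fin_cases i <;> fin_cases j <;> simp <;> ring
  · refine ⟨!![0, 1; -1, 0], by simp [det_fin_two_of], ?_⟩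
    rw [transpose_mul_mul_fin_two]
    ext i j; fin_cases i <;> fin_cases j <;> simp

theorem stmt_2_general (a b c : ℤ)
    (hred : 0 ≤ 2 * b ∧ 2 * b ≤ a ∧ a ≤ c) :
    Nat.card (Quot (fun x y : {Q' : Matrix (Fin 2) (Fin 2) ℤ // GLEquiv !![a, b; b, c] Q'} =>
        SLEquiv x.1 y.1)) =
      if 0 < 2 * b ∧ 2 * b < a ∧ a < c then 2 else 1 := by
  change Nat.card (GLFiber !![a, b; b, c]) = _
  split_ifs with hstrict
  · apply GLFiber.card_eq_two
    rw [transpose_reflectionMatrix_mul_mul_reflectionMatrix]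
    exact not_slEquiv_neg hstrict.1 hstrict.2.1 hstrict.2.2
  · apply GLFiber.card_eq_one
    rw [transpose_reflectionMatrix_mul_mul_reflectionMatrix]
    exact slEquiv_neg_of_boundary (by omega)

/-- Let `Q = ((a,b),(b,c))` be a positive definite even binary quadratic form with
`0 ≤ 2b ≤ a ≤ c`.  The fiber of the projection from `SL₂(ℤ)`-orbits to
`GL₂(ℤ)`-orbits over the orbit of `Q` (that is, the set of `SL₂(ℤ)`-classes
contained in the `GL₂(ℤ)`-class of `Q`) has cardinality `2` if `0 < 2b < a < c`,
and cardinality `1` otherwise. -/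
theorem stmt_2 (a b c : ℤ) (ha : Even a) (hc : Even c)
    (hpos : 0 < a) (hdet : 0 < a * c - b ^ 2)
    (hred : 0 ≤ 2 * b ∧ 2 * b ≤ a ∧ a ≤ c) :
    Nat.card (Quot (fun x y : {Q' : Matrix (Fin 2) (Fin 2) ℤ // GLEquiv !![a, b; b, c] Q'} =>
        SLEquiv x.1 y.1)) =
      if 0 < 2 * b ∧ 2 * b < a ∧ a < c then 2 else 1 :=
  stmt_2_general a b c hred
end

section
/- Let L be an even lattice, A an isotropic subgroup of its discriminant group (D_L, q_L), and M the even overlattice of L corresponding to A. Then the discriminant form (D_M, q_M) is isomorphic to (A^⊥/A, q_L restricted to A^⊥/A), where A^⊥ is the orthogonal complement of A in D_L. -/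
open Matrix

namespace DiscForm

variable {ι : Type} [Fintype ι] [DecidableEq ι]

/-- The bilinear pairing on `ℚ^ι` given by a Gram matrix `G`. -/
def pair (G : Matrix ι ι ℚ) (x y : ι → ℚ) : ℚ := x ⬝ᵥ G.mulVec y

/-- The inclusion `ℤ^ι →+ ℚ^ι`. -/
def intChar (ι : Type) : (ι → ℤ) →+ (ι → ℚ) :=
  AddMonoidHom.compLeft (Int.castAddHom ℚ) ι

/-- The standard lattice `L = ℤ^ι` viewed inside `ℚ^ι`. -/
def L0 (ι : Type) : AddSubgroup (ι → ℚ) := (intChar ι).range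

/-- The dual (with respect to the pairing given by `G`) of a subgroup of `ℚ^ι`:
all vectors pairing integrally with the subgroup.  Applied to `L0` it gives the
dual lattice `L^∨`. -/
def dualOf (G : Matrix ι ι ℚ) (S : AddSubgroup (ι → ℚ)) : AddSubgroup (ι → ℚ) where
  carrier := {x | ∀ y ∈ S, ∃ k : ℤ, pair G x y = k}
  zero_mem' := by
    intro y hy
    exact ⟨0, by simp [pair]⟩
  add_mem' := by
    intro a b ha hb y hy
    obtain ⟨k₁, h₁⟩ := ha y hy
    obtain ⟨k₂, h₂⟩ := hb y hy
    refine ⟨k₁ + k₂, ?_⟩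
    show pair G (a + b) y = _
    unfold pair at *
    rw [add_dotProduct, h₁, h₂]
    push_cast
    ring
  neg_mem' := by
    intro a ha y hy
    obtain ⟨k, h⟩ := ha y hy
    refine ⟨-k, ?_⟩
    show pair G (-a) y = _
    unfold pair at *
    rw [neg_dotProduct, h]
    push_cast
    ring

/-- The dual lattice `L^∨` of the standard lattice with Gram matrix `G`. -/
def Ldual (G : Matrix ι ι ℚ) : AddSubgroup (ι → ℚ) := dualOf G (L0 ι)

/-- The discriminant group `D_L = L^∨ / L`. -/
def disc (G : Matrix ι ι ℚ) : Type _ :=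
  Ldual G ⧸ ((L0 ι).addSubgroupOf (Ldual G))

instance (G : Matrix ι ι ℚ) : AddCommGroup (disc G) :=
  QuotientAddGroup.Quotient.addCommGroup _

/-- The projection `φ_L : L^∨ → D_L`. -/
def dmk (G : Matrix ι ι ℚ) : Ldual G →+ disc G :=
  QuotientAddGroup.mk' _

/-- A subgroup `A` of the discriminant group is isotropic when the discriminant
quadratic form `q_L` vanishes on it, i.e. every representative `x ∈ L^∨` of a
class in `A` has `x·x ∈ 2ℤ`. -/
def Isotropic (G : Matrix ι ι ℚ) (A : AddSubgroup (disc G)) : Prop :=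
  ∀ x : Ldual G, dmk G x ∈ A → ∃ k : ℤ, pair G x x = 2 * k

/-- The subgroup of `ℚ^ι` corresponding to a subgroup `A ⊆ D_L`: the preimage of
`A` under the projection `L^∨ → D_L`. -/
def toOver (G : Matrix ι ι ℚ) (A : AddSubgroup (disc G)) : AddSubgroup (ι → ℚ) :=
  ((A.comap (dmk G)).map (Ldual G).subtype)

/-- `M` is an even overlattice of the standard lattice `L = ℤ^ι` (with Gram
matrix `G`): it contains `L`, is integral, and all its vectors have even norm
(such an `M` automatically lies in `L^∨`). -/
def EvenOverlattice (G : Matrix ι ι ℚ) (M : AddSubgroup (ι → ℚ)) : Prop :=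
  L0 ι ≤ M ∧ (∀ x ∈ M, ∀ y ∈ M, ∃ k : ℤ, pair G x y = k) ∧
    (∀ x ∈ M, ∃ k : ℤ, pair G x x = 2 * k)

end DiscForm

namespace DiscForm

variable {ι : Type} [Fintype ι] [DecidableEq ι]

/-- The preimage in `L^∨` of the orthogonal complement `A^⊥` of a subgroup
`A ⊆ D_L` (orthogonality with respect to the bilinear form associated with
`q_L`, i.e. integral pairing with every representative of a class of `A`). -/
def perpPre (G : Matrix ι ι ℚ) (A : AddSubgroup (disc G)) : AddSubgroup (ι → ℚ) where
  carrier := {x | x ∈ Ldual G ∧ ∀ y : Ldual G, dmk G y ∈ A → ∃ k : ℤ, pair G x y = k}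
  zero_mem' := by
    refine ⟨(Ldual G).zero_mem, ?_⟩
    intro y hy
    exact ⟨0, by simp [pair]⟩
  add_mem' := by
    intro a b ha hb
    refine ⟨(Ldual G).add_mem ha.1 hb.1, ?_⟩
    intro y hy
    obtain ⟨k₁, h₁⟩ := ha.2 y hy
    obtain ⟨k₂, h₂⟩ := hb.2 y hy
    refine ⟨k₁ + k₂, ?_⟩
    show pair G (a + b) y = _
    unfold pair at *
    rw [add_dotProduct, h₁, h₂]
    push_cast; ring
  neg_mem' := by
    intro a ha
    refine ⟨(Ldual G).neg_mem ha.1, ?_⟩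
    intro y hy
    obtain ⟨k, h⟩ := ha.2 y hy
    refine ⟨-k, ?_⟩
    show pair G (-a) y = _
    unfold pair at *
    rw [neg_dotProduct, h]
    push_cast; ring

end DiscForm


namespace DiscForm

variable {ι : Type} [Fintype ι] [DecidableEq ι]

lemma intChar_apply (a : ι → ℤ) (i : ι) : intChar ι a i = (a i : ℚ) := rfl

lemma pair_int' (G : Matrix ι ι ℤ) (a b : ι → ℤ) :
    pair (G.map ((↑) : ℤ → ℚ)) (intChar ι a) (intChar ι b)
      = ((a ⬝ᵥ G.mulVec b : ℤ) : ℚ) := by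
  simp only [pair, dotProduct, Matrix.mulVec, intChar, AddMonoidHom.compLeft,
    Matrix.map_apply, AddMonoidHom.coe_mk, ZeroHom.coe_mk, Function.comp_apply,
    Int.coe_castAddHom]
  push_cast
  rfl

lemma pair_comm (G : Matrix ι ι ℚ) (hG : G.IsSymm) (x y : ι → ℚ) :
    pair G x y = pair G y x := by
  unfold pair
  rw [Matrix.dotProduct_mulVec, ← Matrix.mulVec_transpose, hG.eq, dotProduct_comm]

lemma pair_add_add (G : Matrix ι ι ℚ) (x y z w : ι → ℚ) :
    pair G (x + y) (z + w) = pair G x z + pair G x w + pair G y z + pair G y w := by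
  unfold pair
  rw [Matrix.mulVec_add, add_dotProduct, dotProduct_add, dotProduct_add]
  ring

lemma mem_toOver {G : Matrix ι ι ℚ} {A : AddSubgroup (disc G)} {y : ι → ℚ} :
    y ∈ toOver G A ↔ ∃ h : y ∈ Ldual G, dmk G ⟨y, h⟩ ∈ A := by
  constructor
  · rintro ⟨⟨z, hz⟩, hzA, rfl⟩
    exact ⟨hz, hzA⟩
  · rintro ⟨h, hA⟩
    exact ⟨⟨y, h⟩, hA, rfl⟩

end DiscForm

open DiscForm

/-- (Nikulin.)  Let `L` be a nondegenerate even lattice presented by a symmetric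
Gram matrix `G` with `det G ≠ 0` and even norms, `A` an isotropic subgroup of its
discriminant group `(D_L, q_L)`, and `M = φ_L⁻¹(A)` the corresponding even
overlattice of `L`.  Then the discriminant form `(D_M, q_M)` is isomorphic to
`(A^⊥/A, q_L|_{A^⊥/A})`:  there is an additive isomorphism
`D_M = M^∨/M ≃ A^⊥/A` matching the quadratic forms (computed on representatives,
modulo `2ℤ`). -/
theorem stmt_9 (n : ℕ) (G : Matrix (Fin n) (Fin n) ℤ) (hsym : G.IsSymm)
    (hdet : G.det ≠ 0) (heven : ∀ v : Fin n → ℤ, Even (v ⬝ᵥ G.mulVec v))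
    (A : AddSubgroup (disc (G.map ((↑) : ℤ → ℚ))))
    (hA : Isotropic (G.map ((↑) : ℤ → ℚ)) A)
    (M : AddSubgroup (Fin n → ℚ)) (hM : M = toOver (G.map ((↑) : ℤ → ℚ)) A) :
    ∃ e : (dualOf (G.map ((↑) : ℤ → ℚ)) M ⧸
            (M.addSubgroupOf (dualOf (G.map ((↑) : ℤ → ℚ)) M))) ≃+
          (perpPre (G.map ((↑) : ℤ → ℚ)) A ⧸
            (M.addSubgroupOf (perpPre (G.map ((↑) : ℤ → ℚ)) A))),
      ∀ (x : dualOf (G.map ((↑) : ℤ → ℚ)) M)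
        (y : perpPre (G.map ((↑) : ℤ → ℚ)) A),
        e (QuotientAddGroup.mk x) = QuotientAddGroup.mk y →
          ∃ k : ℤ, pair (G.map ((↑) : ℤ → ℚ)) x x - pair (G.map ((↑) : ℤ → ℚ)) y y
            = 2 * k := by
  subst hM
  have hGsymm : (G.map ((↑) : ℤ → ℚ)).IsSymm := hsym.map _
  have hL0dual : L0 (Fin n) ≤ Ldual (G.map ((↑) : ℤ → ℚ)) := by
    rintro _ ⟨a, rfl⟩ _ ⟨b, rfl⟩
    exact ⟨a ⬝ᵥ G.mulVec b, pair_int' G a b⟩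
  have hL0M : L0 (Fin n) ≤ toOver (G.map ((↑) : ℤ → ℚ)) A := by
    intro v hv
    refine mem_toOver.2 ⟨hL0dual hv, ?_⟩
    have h0 : dmk (G.map ((↑) : ℤ → ℚ)) ⟨v, hL0dual hv⟩ = 0 :=
      (QuotientAddGroup.eq_zero_iff _).2 ((AddSubgroup.mem_addSubgroupOf).2 hv)
    rw [h0]
    exact A.zero_mem
  have hkey : dualOf (G.map ((↑) : ℤ → ℚ)) (toOver (G.map ((↑) : ℤ → ℚ)) A) = perpPre (G.map ((↑) : ℤ → ℚ)) A := by
    ext x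
    constructor
    · intro hx
      exact ⟨fun y hy => hx y (hL0M hy), fun z hz => hx z (mem_toOver.2 ⟨z.2, hz⟩)⟩
    · rintro ⟨hxL, hx⟩ y hy
      obtain ⟨h1, h2⟩ := mem_toOver.1 hy
      exact hx ⟨y, h1⟩ h2
  have hmap : ((toOver (G.map ((↑) : ℤ → ℚ)) A).addSubgroupOf (dualOf (G.map ((↑) : ℤ → ℚ)) (toOver (G.map ((↑) : ℤ → ℚ)) A))).map
      (AddEquiv.addSubgroupCongr hkey) = (toOver (G.map ((↑) : ℤ → ℚ)) A).addSubgroupOf (perpPre (G.map ((↑) : ℤ → ℚ)) A) := by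
    ext x
    simp only [AddSubgroup.mem_map, AddSubgroup.mem_addSubgroupOf]
    constructor
    · rintro ⟨w, hw, rfl⟩
      simpa [AddEquiv.addSubgroupCongr_apply] using hw
    · intro hx
      exact ⟨⟨(x : Fin n → ℚ), hkey.symm ▸ x.2⟩, hx, Subtype.ext rfl⟩
  refine ⟨QuotientAddGroup.congr _ _ (AddEquiv.addSubgroupCongr hkey) hmap, ?_⟩
  intro x y h
  have h' : (QuotientAddGroup.mk (AddEquiv.addSubgroupCongr hkey x) :
      perpPre (G.map ((↑) : ℤ → ℚ)) A ⧸ (toOver (G.map ((↑) : ℤ → ℚ)) A).addSubgroupOf (perpPre (G.map ((↑) : ℤ → ℚ)) A)) = QuotientAddGroup.mk y := h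
  have hmem := (QuotientAddGroup.eq).mp h'
  rw [AddSubgroup.mem_addSubgroupOf] at hmem
  have hm : (-(x : Fin n → ℚ) + ↑y) ∈ toOver (G.map ((↑) : ℤ → ℚ)) A := by
    simpa [AddEquiv.addSubgroupCongr_apply] using hmem
  set m : Fin n → ℚ := -(x : Fin n → ℚ) + ↑y with hmdef
  obtain ⟨hmL, hmA⟩ := mem_toOver.1 hm
  obtain ⟨k1, hk1⟩ := x.2 m hm
  obtain ⟨k2, hk2⟩ := hA ⟨m, hmL⟩ hmA
  have hy : (y : Fin n → ℚ) = ↑x + m := by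
    rw [hmdef, add_neg_cancel_left]
  refine ⟨-(k1 + k2), ?_⟩
  rw [hy, pair_add_add, pair_comm (G.map ((↑) : ℤ → ℚ)) hGsymm m (↑x), hk1]
  rw [show pair (G.map ((↑) : ℤ → ℚ)) m m = 2 * (k2 : ℚ) from hk2]
  push_cast
  ring
end

section
/- Let S and K be nondegenerate even lattices. There exists an isomorphism of abelian groups γ : D_S → D_K with γ*q_K = −q_S if and only if there exists an even unimodular overlattice of S ⊕ K into which both S and K are primitively embedded. -/
/-!
An even overlattice `N` of `S ⊕ K` lies in `S^∨ ⊕ K^∨`, so it is the preimage of a subgroup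
`H ≤ D_S × D_K`. Primitivity of `S` and of `K` says that `H` meets `0 × D_K` and `D_S × 0`
trivially. Together with unimodularity it also says that the projection of `N` to `S^∨` has
orthogonal `S`, which by `ℚ/ℤ`-duality forces `H` to project onto `D_S` (and likewise onto
`D_K`). By Goursat's lemma `H` is then the graph of an isomorphism `γ : D_S ≃ D_K`, and
evenness of `N` is exactly `γ*q_K = -q_S`. Conversely the preimage of the graph of such a `γ` is
even, and it is self-dual because the discriminant pairing of `K` is nondegenerate.
-/

open Matrix

open DiscForm

namespace DiscForm

variable {ι κ : Type}

section Lattices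

lemma mem_L0_iff {x : ι → ℚ} : x ∈ L0 ι ↔ ∀ i, ∃ k : ℤ, x i = k := by
  constructor
  · rintro ⟨v, rfl⟩ i
    exact ⟨v i, rfl⟩
  · intro h
    choose v hv using h
    exact ⟨v, funext fun i => (hv i).symm⟩

lemma sumElim_mem_L0_iff {x : ι → ℚ} {y : κ → ℚ} :
    Sum.elim x y ∈ L0 (ι ⊕ κ) ↔ x ∈ L0 ι ∧ y ∈ L0 κ := by
  simp only [mem_L0_iff, Sum.forall, Sum.elim_inl, Sum.elim_inr]

lemma mem_L0_iff_of_sumElim_mem {N : AddSubgroup ((ι ⊕ κ) → ℚ)} (hL0 : L0 (ι ⊕ κ) ≤ N)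
    (hprimA : ∀ x : ι → ℚ, Sum.elim x (0 : κ → ℚ) ∈ N → x ∈ L0 ι)
    (hprimB : ∀ y : κ → ℚ, Sum.elim (0 : ι → ℚ) y ∈ N → y ∈ L0 κ)
    {x : ι → ℚ} {y : κ → ℚ} (hxy : Sum.elim x y ∈ N) : x ∈ L0 ι ↔ y ∈ L0 κ := by
  constructor
  · intro hx
    refine hprimB y ?_
    have := sub_mem hxy (hL0 (sumElim_mem_L0_iff.2 ⟨hx, zero_mem (L0 κ)⟩))
    rwa [← Sum.elim_sub_sub, sub_self, sub_zero] at this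
  · intro hy
    refine hprimA x ?_
    have := sub_mem hxy (hL0 (sumElim_mem_L0_iff.2 ⟨zero_mem (L0 ι), hy⟩))
    rwa [← Sum.elim_sub_sub, sub_self, sub_zero] at this

lemma single_one_mem_L0 [DecidableEq ι] (i : ι) : Pi.single i (1 : ℚ) ∈ L0 ι :=
  ⟨Pi.single i 1, by ext j; simp [intChar, Pi.single_apply]⟩

end Lattices

section Pairing

variable [Fintype ι] [Fintype κ]

variable (A : Matrix ι ι ℚ)

@[simp] lemma pair_add_left (x x' y : ι → ℚ) :
    pair A (x + x') y = pair A x y + pair A x' y :=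
  add_dotProduct ..

@[simp] lemma pair_add_right (x y y' : ι → ℚ) :
    pair A x (y + y') = pair A x y + pair A x y' := by
  simp [pair, mulVec_add]

@[simp] lemma pair_sub_left (x x' y : ι → ℚ) :
    pair A (x - x') y = pair A x y - pair A x' y :=
  sub_dotProduct ..

@[simp] lemma pair_zero_left (y : ι → ℚ) : pair A 0 y = 0 := zero_dotProduct _

@[simp] lemma pair_zero_right (x : ι → ℚ) : pair A x 0 = 0 := by simp [pair]

variable {A}

lemma pair_eq_mulVec_dotProduct (hA : A.IsSymm) (x y : ι → ℚ) :
    pair A x y = A *ᵥ x ⬝ᵥ y := by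
  rw [pair, dotProduct_mulVec, ← mulVec_transpose, hA.eq, dotProduct_comm]

lemma pair_comm_s10 (hA : A.IsSymm) (x y : ι → ℚ) : pair A x y = pair A y x := by
  rw [pair_eq_mulVec_dotProduct hA, dotProduct_comm, pair]

lemma pair_fromBlocks_sumElim (B : Matrix κ κ ℚ) (x x' : ι → ℚ) (y y' : κ → ℚ) :
    pair (fromBlocks A 0 0 B) (Sum.elim x y) (Sum.elim x' y') = pair A x x' + pair B y y' := by
  simp [pair, fromBlocks_mulVec, sumElim_dotProduct_sumElim]

end Pairing

section DualLattices

variable [Fintype ι] [Fintype κ]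

lemma dotProduct_mem_L0 {u v : ι → ℚ} (hu : u ∈ L0 ι) (hv : v ∈ L0 ι) :
    ∃ k : ℤ, u ⬝ᵥ v = k := by
  obtain ⟨a, rfl⟩ := hu
  obtain ⟨b, rfl⟩ := hv
  exact ⟨a ⬝ᵥ b, by simp [intChar, dotProduct]⟩

lemma L0_le_Ldual_map (A : Matrix ι ι ℤ) : L0 ι ≤ Ldual (A.map ((↑) : ℤ → ℚ)) := by
  rintro _ ⟨v, rfl⟩ _ ⟨w, rfl⟩
  exact ⟨v ⬝ᵥ A *ᵥ w, by simp [pair, intChar, dotProduct, mulVec, Finset.mul_sum]⟩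

lemma isUnit_det_map_intCast [DecidableEq ι] {A : Matrix ι ι ℤ} (h : A.det ≠ 0) :
    IsUnit (A.map ((↑) : ℤ → ℚ)).det := by
  rw [← Int.cast_det, isUnit_iff_ne_zero]
  exact_mod_cast h

variable {A : Matrix ι ι ℚ}

lemma dualOf_anti {G : Matrix ι ι ℚ} {M M' : AddSubgroup (ι → ℚ)} (h : M ≤ M') :
    dualOf G M' ≤ dualOf G M :=
  fun _ hx y hy => hx y (h hy)

lemma mem_Ldual_iff (hA : A.IsSymm) {x : ι → ℚ} : x ∈ Ldual A ↔ A *ᵥ x ∈ L0 ι := by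
  refine ⟨fun hx => mem_L0_iff.2 fun i => ?_, fun hx y hy => ?_⟩
  · classical
    obtain ⟨k, hk⟩ := hx _ (single_one_mem_L0 i)
    rw [pair_eq_mulVec_dotProduct hA, dotProduct_single_one] at hk
    exact ⟨k, hk⟩
  · rw [pair_eq_mulVec_dotProduct hA]
    exact dotProduct_mem_L0 hx hy

lemma le_dualOf_of_even (hA : A.IsSymm) {M : AddSubgroup (ι → ℚ)}
    (heven : ∀ x ∈ M, ∃ k : ℤ, pair A x x = 2 * k) : M ≤ dualOf A M := by
  intro x hx y hy
  obtain ⟨a, ha⟩ := heven x hx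
  obtain ⟨b, hb⟩ := heven y hy
  obtain ⟨c, hc⟩ := heven (x + y) (add_mem hx hy)
  refine ⟨c - a - b, ?_⟩
  simp only [pair_add_left, pair_add_right, pair_comm_s10 hA y x] at hc
  push_cast
  linarith

lemma sumElim_mem_Ldual_fromBlocks_iff {B : Matrix κ κ ℚ} {x : ι → ℚ} {y : κ → ℚ} :
    Sum.elim x y ∈ Ldual (fromBlocks A 0 0 B) ↔ x ∈ Ldual A ∧ y ∈ Ldual B := by
  refine ⟨fun h => ⟨fun v hv => ?_, fun w hw => ?_⟩, fun ⟨hx, hy⟩ w hw => ?_⟩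
  · simpa [pair_fromBlocks_sumElim] using
      h (Sum.elim v 0) (sumElim_mem_L0_iff.2 ⟨hv, zero_mem _⟩)
  · simpa [pair_fromBlocks_sumElim] using
      h (Sum.elim 0 w) (sumElim_mem_L0_iff.2 ⟨zero_mem _, hw⟩)
  · rw [← Sum.elim_comp_inl_inr w] at hw ⊢
    obtain ⟨hv, hw⟩ := sumElim_mem_L0_iff.1 hw
    obtain ⟨a, ha⟩ := hx _ hv
    obtain ⟨b, hb⟩ := hy _ hw
    exact ⟨a + b, by rw [pair_fromBlocks_sumElim, ha, hb]; push_cast; rfl⟩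

variable [DecidableEq ι]

lemma inv_mulVec_mem_Ldual (hA : A.IsSymm) (hdet : IsUnit A.det) {v : ι → ℚ}
    (hv : v ∈ L0 ι) : A⁻¹ *ᵥ v ∈ Ldual A := by
  rwa [mem_Ldual_iff hA, mulVec_mulVec, mul_nonsing_inv A hdet, one_mulVec]

lemma dualOf_Ldual_le (hA : A.IsSymm) (hdet : IsUnit A.det) : dualOf A (Ldual A) ≤ L0 ι := by
  refine fun x hx => mem_L0_iff.2 fun i => ?_
  obtain ⟨k, hk⟩ := hx _ (inv_mulVec_mem_Ldual hA hdet (single_one_mem_L0 i))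
  rw [pair, mulVec_mulVec, mul_nonsing_inv A hdet, one_mulVec, dotProduct_single_one] at hk
  exact ⟨k, hk⟩

end DualLattices

section Discriminant

variable [Fintype ι] {A : Matrix ι ι ℚ}

lemma dmk_surjective (A : Matrix ι ι ℚ) : Function.Surjective (dmk A) :=
  QuotientAddGroup.mk'_surjective _

lemma dmk_eq_zero_iff {x : Ldual A} : dmk A x = 0 ↔ (x : ι → ℚ) ∈ L0 ι :=
  (QuotientAddGroup.eq_zero_iff x).trans AddSubgroup.mem_addSubgroupOf

lemma dmk_eq_dmk_iff {x y : Ldual A} : dmk A x = dmk A y ↔ (x : ι → ℚ) - y ∈ L0 ι := by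
  rw [← sub_eq_zero, ← map_sub, dmk_eq_zero_iff, AddSubgroup.coe_sub]

variable [DecidableEq ι]

lemma exists_eq_pair_of_addMonoidHom (hA : A.IsSymm) (hdet : IsUnit A.det)
    (φ : (ι → ℚ) →+ AddCircle (1 : ℚ)) :
    ∃ c : ι → ℚ, ∀ w ∈ Ldual A, φ w = (pair A c w : AddCircle (1 : ℚ)) := by
  -- `L^∨ = A⁻¹ ℤ^ι` is free on the `A⁻¹ eᵢ`; `cᵢ` lifts the value of `φ` at `A⁻¹ eᵢ`.
  let ψ : (ι → ℤ) →ₗ[ℤ] AddCircle (1 : ℚ) :=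
    (φ.comp ((mulVecLin A⁻¹).toAddMonoidHom.comp (intChar ι))).toIntLinearMap
  choose c hc using fun i =>
    QuotientAddGroup.mk_surjective (ψ fun j => if i = j then 1 else 0)
  refine ⟨c, fun w hw => ?_⟩
  obtain ⟨v, hv⟩ := (mem_Ldual_iff hA).1 hw
  have hw' : w = A⁻¹ *ᵥ intChar ι v := by
    rw [hv, mulVec_mulVec, nonsing_inv_mul A hdet, one_mulVec]
  calc φ w = ψ v := by rw [hw']; rfl
  _ = ∑ i, v i • (c i : AddCircle (1 : ℚ)) := by simp only [ψ.pi_apply_eq_sum_univ v, hc]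
  _ = ((c ⬝ᵥ intChar ι v : ℚ) : AddCircle (1 : ℚ)) := by
    rw [dotProduct, QuotientAddGroup.mk_sum]
    refine Finset.sum_congr rfl fun i _ => ?_
    rw [← QuotientAddGroup.mk_zsmul, zsmul_eq_mul, mul_comm]
    rfl
  _ = pair A c w := by rw [pair, ← hv]

lemma Ldual_le_of_dualOf_le (hA : A.IsSymm) (hdet : IsUnit A.det) {P : AddSubgroup (ι → ℚ)}
    (hP : P ≤ Ldual A) (hperp : dualOf A P ≤ L0 ι) : Ldual A ≤ P := by
  intro x hx
  by_contra hxP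
  -- A character of `ℚ^ι / P` nonzero at `x` is, on `L^∨`, pairing with a vector orthogonal to
  -- `P`, hence lying in `L`, hence integral on all of `L^∨`.
  obtain ⟨χ, hχ⟩ := CharacterModule.exists_character_apply_ne_zero_of_ne_zero
    (a := (x : (ι → ℚ) ⧸ P)) (by rwa [Ne, QuotientAddGroup.eq_zero_iff])
  obtain ⟨c, hc⟩ := exists_eq_pair_of_addMonoidHom hA hdet
    (χ.comp (QuotientAddGroup.mk' P))
  have hcP : c ∈ dualOf A P := fun w hw => by
    have hw0 : χ (w : (ι → ℚ) ⧸ P) = pair A c w := hc w (hP hw)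
    rw [(QuotientAddGroup.eq_zero_iff w).2 hw, map_zero, eq_comm] at hw0
    obtain ⟨n, hn⟩ := (AddCircle.coe_eq_zero_iff _).1 hw0
    exact ⟨n, by simpa using hn.symm⟩
  obtain ⟨k, hk⟩ := hx c (hperp hcP)
  have hx0 : χ (x : (ι → ℚ) ⧸ P) = pair A c x := hc x hx
  rw [pair_comm_s10 hA, hk] at hx0
  exact hχ (hx0.trans ((AddCircle.coe_eq_zero_iff _).2 ⟨k, by simp⟩))

end Discriminant

section Gluing

variable [Fintype ι] [Fintype κ] {A : Matrix ι ι ℚ} {B : Matrix κ κ ℚ}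

variable (A B) in
def sumElimHom : Ldual A × Ldual B →+ ((ι ⊕ κ) → ℚ) where
  toFun p := Sum.elim p.1 p.2
  map_zero' := Sum.elim_zero_zero
  map_add' _ _ := Sum.elim_add_add ..

def graphLattice (γ : disc A ≃+ disc B) : AddSubgroup ((ι ⊕ κ) → ℚ) :=
  (γ.toAddMonoidHom.graph.comap ((dmk A).prodMap (dmk B))).map (sumElimHom A B)

lemma mem_graphLattice {γ : disc A ≃+ disc B} {z : (ι ⊕ κ) → ℚ} :
    z ∈ graphLattice γ ↔
      ∃ (x : Ldual A) (y : Ldual B), γ (dmk A x) = dmk B y ∧ Sum.elim (x : ι → ℚ) y = z := by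
  simp [graphLattice, sumElimHom, AddMonoidHom.mem_graph]

variable {γ : disc A ≃+ disc B}

lemma L0_le_graphLattice (hA : L0 ι ≤ Ldual A) (hB : L0 κ ≤ Ldual B) :
    L0 (ι ⊕ κ) ≤ graphLattice γ := by
  intro z hz
  rw [← Sum.elim_comp_inl_inr z] at hz ⊢
  obtain ⟨hx, hy⟩ := sumElim_mem_L0_iff.1 hz
  refine mem_graphLattice.2 ⟨⟨_, hA hx⟩, ⟨_, hB hy⟩, ?_, rfl⟩
  rw [dmk_eq_zero_iff.2 hx, dmk_eq_zero_iff.2 hy, map_zero]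

lemma graphLattice_even
    (hγ : ∀ x y, γ (dmk A x) = dmk B y → ∃ k : ℤ, pair B y y + pair A x x = 2 * k) :
    ∀ z ∈ graphLattice γ, ∃ k : ℤ, pair (fromBlocks A 0 0 B) z z = 2 * k := by
  intro z hz
  obtain ⟨x, y, hxy, rfl⟩ := mem_graphLattice.1 hz
  obtain ⟨k, hk⟩ := hγ x y hxy
  exact ⟨k, by rw [pair_fromBlocks_sumElim, add_comm, hk]⟩

lemma graphLattice_primitive_left :
    ∀ z ∈ graphLattice γ, (∀ j, z (Sum.inr j) = 0) → ∀ i, ∃ k : ℤ, z (Sum.inl i) = k := by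
  intro z hz h0
  obtain ⟨x, y, hxy, rfl⟩ := mem_graphLattice.1 hz
  have hy : dmk B y = 0 :=
    dmk_eq_zero_iff.2 (by rw [show (y : κ → ℚ) = 0 from funext h0]; simp)
  rw [hy, AddEquiv.map_eq_zero_iff] at hxy
  exact mem_L0_iff.1 (dmk_eq_zero_iff.1 hxy)

lemma graphLattice_primitive_right :
    ∀ z ∈ graphLattice γ, (∀ i, z (Sum.inl i) = 0) → ∀ j, ∃ k : ℤ, z (Sum.inr j) = k := by
  intro z hz h0
  obtain ⟨x, y, hxy, rfl⟩ := mem_graphLattice.1 hz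
  have hx : dmk A x = 0 :=
    dmk_eq_zero_iff.2 (by rw [show (x : ι → ℚ) = 0 from funext h0]; simp)
  rw [hx, map_zero, eq_comm] at hxy
  exact mem_L0_iff.1 (dmk_eq_zero_iff.1 hxy)

lemma mem_graphLattice_iff_mem_dualOf [DecidableEq κ] (hA : A.IsSymm) (hB : B.IsSymm)
    (hBdet : IsUnit B.det) (hAint : L0 ι ≤ Ldual A) (hBint : L0 κ ≤ Ldual B)
    (hγ : ∀ x y, γ (dmk A x) = dmk B y → ∃ k : ℤ, pair B y y + pair A x x = 2 * k)
    (z : (ι ⊕ κ) → ℚ) :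
    z ∈ graphLattice γ ↔ z ∈ dualOf (fromBlocks A 0 0 B) (graphLattice γ) := by
  have hint := le_dualOf_of_even (hA.fromBlocks transpose_zero hB) (graphLattice_even hγ)
  refine ⟨fun hz => hint hz, fun hz => ?_⟩
  have hzdual := dualOf_anti (L0_le_graphLattice hAint hBint) hz
  rw [← Sum.elim_comp_inl_inr z] at hz hzdual ⊢
  obtain ⟨hx, hy⟩ := sumElim_mem_Ldual_fromBlocks_iff.1 hzdual
  obtain ⟨y₁, hy₁⟩ := dmk_surjective B (γ (dmk A ⟨_, hx⟩))
  have hdiff : z ∘ Sum.inr - y₁ ∈ L0 κ := by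
    refine dualOf_Ldual_le hB hBdet fun w hw => ?_
    obtain ⟨xw, hxw⟩ := (γ.surjective.comp (dmk_surjective A)) (dmk B ⟨w, hw⟩)
    have hmem : Sum.elim (xw : ι → ℚ) w ∈ graphLattice γ :=
      mem_graphLattice.2 ⟨xw, ⟨w, hw⟩, hxw, rfl⟩
    obtain ⟨a, ha⟩ := hz _ hmem
    obtain ⟨b, hb⟩ := hint (mem_graphLattice.2 ⟨⟨_, hx⟩, y₁, hy₁.symm, rfl⟩) _ hmem
    rw [pair_fromBlocks_sumElim] at ha hb
    exact ⟨a - b, by rw [pair_sub_left]; push_cast; linarith⟩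
  exact mem_graphLattice.2 ⟨⟨_, hx⟩, ⟨_, hy⟩, hy₁ ▸ (dmk_eq_dmk_iff.2 hdiff).symm, rfl⟩

end Gluing

section Unimodular

variable [Fintype ι] [Fintype κ] {A : Matrix ι ι ℚ} {B : Matrix κ κ ℚ}
  {N : AddSubgroup ((ι ⊕ κ) → ℚ)}

lemma sumElim_mem_Ldual_of_mem (hL0 : L0 (ι ⊕ κ) ≤ N)
    (huni : ∀ z, z ∈ N ↔ z ∈ dualOf (fromBlocks A 0 0 B) N) {x : ι → ℚ} {y : κ → ℚ}
    (hxy : Sum.elim x y ∈ N) : x ∈ Ldual A ∧ y ∈ Ldual B :=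
  sumElim_mem_Ldual_fromBlocks_iff.1 (dualOf_anti hL0 ((huni _).1 hxy))

lemma exists_sumElim_mem_of_mem_Ldual_left [DecidableEq ι] (hA : A.IsSymm)
    (hAdet : IsUnit A.det)
    (hL0 : L0 (ι ⊕ κ) ≤ N) (huni : ∀ z, z ∈ N ↔ z ∈ dualOf (fromBlocks A 0 0 B) N)
    (hprimA : ∀ x : ι → ℚ, Sum.elim x (0 : κ → ℚ) ∈ N → x ∈ L0 ι) {x : ι → ℚ}
    (hx : x ∈ Ldual A) :
    ∃ y ∈ Ldual B, Sum.elim x y ∈ N := by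
  let P := N.map (LinearMap.funLeft ℚ ℚ Sum.inl).toAddMonoidHom
  have hP : P ≤ Ldual A := by
    rintro _ ⟨z, hz, rfl⟩
    rw [← Sum.elim_comp_inl_inr z] at hz
    exact (sumElim_mem_Ldual_of_mem hL0 huni hz).1
  have hperp : dualOf A P ≤ L0 ι := fun c hc => hprimA c <| (huni _).2 fun z hz => by
    rw [← Sum.elim_comp_inl_inr z, pair_fromBlocks_sumElim, pair_zero_left, add_zero]
    exact hc _ ⟨z, hz, rfl⟩
  obtain ⟨z, hz, rfl⟩ := Ldual_le_of_dualOf_le hA hAdet hP hperp hx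
  rw [← Sum.elim_comp_inl_inr z] at hz
  exact ⟨z ∘ Sum.inr, (sumElim_mem_Ldual_of_mem hL0 huni hz).2, hz⟩

lemma exists_sumElim_mem_of_mem_Ldual_right [DecidableEq κ] (hB : B.IsSymm)
    (hBdet : IsUnit B.det)
    (hL0 : L0 (ι ⊕ κ) ≤ N) (huni : ∀ z, z ∈ N ↔ z ∈ dualOf (fromBlocks A 0 0 B) N)
    (hprimB : ∀ y : κ → ℚ, Sum.elim (0 : ι → ℚ) y ∈ N → y ∈ L0 κ) {y : κ → ℚ}
    (hy : y ∈ Ldual B) :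
    ∃ x ∈ Ldual A, Sum.elim x y ∈ N := by
  let P := N.map (LinearMap.funLeft ℚ ℚ Sum.inr).toAddMonoidHom
  have hP : P ≤ Ldual B := by
    rintro _ ⟨z, hz, rfl⟩
    rw [← Sum.elim_comp_inl_inr z] at hz
    exact (sumElim_mem_Ldual_of_mem hL0 huni hz).2
  have hperp : dualOf B P ≤ L0 κ := fun c hc => hprimB c <| (huni _).2 fun z hz => by
    rw [← Sum.elim_comp_inl_inr z, pair_fromBlocks_sumElim, pair_zero_left, zero_add]
    exact hc _ ⟨z, hz, rfl⟩
  obtain ⟨z, hz, rfl⟩ := Ldual_le_of_dualOf_le hB hBdet hP hperp hy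
  rw [← Sum.elim_comp_inl_inr z] at hz
  exact ⟨z ∘ Sum.inl, (sumElim_mem_Ldual_of_mem hL0 huni hz).1, hz⟩

lemma sumElim_mem_of_dmk_eq (hL0 : L0 (ι ⊕ κ) ≤ N) {x x' : Ldual A} {y y' : Ldual B}
    (hmem : Sum.elim (x' : ι → ℚ) y' ∈ N) (hx : dmk A x = dmk A x') (hy : dmk B y = dmk B y') :
    Sum.elim (x : ι → ℚ) y ∈ N := by
  have := add_mem hmem (hL0 (sumElim_mem_L0_iff.2 ⟨dmk_eq_dmk_iff.1 hx, dmk_eq_dmk_iff.1 hy⟩))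
  rwa [← Sum.elim_add_add, add_sub_cancel, add_sub_cancel] at this

lemma exists_discEquiv_of_unimodular [DecidableEq ι] [DecidableEq κ] (hA : A.IsSymm)
    (hB : B.IsSymm) (hAdet : IsUnit A.det) (hBdet : IsUnit B.det) (hL0 : L0 (ι ⊕ κ) ≤ N)
    (heven : ∀ z ∈ N, ∃ k : ℤ, pair (fromBlocks A 0 0 B) z z = 2 * k)
    (huni : ∀ z, z ∈ N ↔ z ∈ dualOf (fromBlocks A 0 0 B) N)
    (hprimA : ∀ z ∈ N, (∀ j, z (Sum.inr j) = 0) → ∀ i, ∃ k : ℤ, z (Sum.inl i) = k)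
    (hprimB : ∀ z ∈ N, (∀ i, z (Sum.inl i) = 0) → ∀ j, ∃ k : ℤ, z (Sum.inr j) = k) :
    ∃ γ : disc A ≃+ disc B,
      ∀ x y, γ (dmk A x) = dmk B y → ∃ k : ℤ, pair B y y + pair A x x = 2 * k := by
  replace hprimA : ∀ x : ι → ℚ, Sum.elim x (0 : κ → ℚ) ∈ N → x ∈ L0 ι :=
    fun x hx => mem_L0_iff.2 (hprimA _ hx fun _ => rfl)
  replace hprimB : ∀ y : κ → ℚ, Sum.elim (0 : ι → ℚ) y ∈ N → y ∈ L0 κ :=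
    fun y hy => mem_L0_iff.2 (hprimB _ hy fun _ => rfl)
  let f := ((dmk A).prodMap (dmk B)).comp (N.comap (sumElimHom A B)).subtype
  have hfst : Function.Surjective (Prod.fst ∘ f) := fun a => by
    obtain ⟨x, rfl⟩ := dmk_surjective A a
    obtain ⟨y, hy, hxy⟩ := exists_sumElim_mem_of_mem_Ldual_left hA hAdet hL0 huni hprimA x.2
    exact ⟨⟨(x, ⟨y, hy⟩), hxy⟩, rfl⟩
  have hsnd : Function.Surjective (Prod.snd ∘ f) := fun b => by
    obtain ⟨y, rfl⟩ := dmk_surjective B b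
    obtain ⟨x, hx, hxy⟩ := exists_sumElim_mem_of_mem_Ldual_right hB hBdet hL0 huni hprimB y.2
    exact ⟨⟨(⟨x, hx⟩, y), hxy⟩, rfl⟩
  have hlines : ∀ g₁ g₂, (f g₁).1 = (f g₂).1 ↔ (f g₁).2 = (f g₂).2 := fun g₁ g₂ => by
    change dmk A g₁.1.1 = dmk A g₂.1.1 ↔ dmk B g₁.1.2 = dmk B g₂.1.2
    rw [dmk_eq_dmk_iff, dmk_eq_dmk_iff]
    exact mem_L0_iff_of_sumElim_mem hL0 hprimA hprimB (sub_mem g₁.2 g₂.2)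
  obtain ⟨γ, hγ⟩ := AddMonoidHom.exists_addEquiv_range_eq_graph hfst hsnd hlines
  refine ⟨γ, fun x y hxy => ?_⟩
  obtain ⟨⟨⟨x', y'⟩, hmem⟩, hf⟩ : (dmk A x, dmk B y) ∈ f.range := hγ ▸ hxy
  obtain ⟨k, hk⟩ := heven _ <|
    sumElim_mem_of_dmk_eq hL0 hmem (congrArg Prod.fst hf).symm (congrArg Prod.snd hf).symm
  rw [pair_fromBlocks_sumElim] at hk
  exact ⟨k, by linarith⟩

end Unimodular

end DiscForm

theorem stmt_10_general (p q : ℕ)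
    (GS : Matrix (Fin p) (Fin p) ℤ) (GK : Matrix (Fin q) (Fin q) ℤ)
    (hSsym : GS.IsSymm) (hKsym : GK.IsSymm)
    (hSdet : GS.det ≠ 0) (hKdet : GK.det ≠ 0) :
    (∃ γ : disc (GS.map ((↑) : ℤ → ℚ)) ≃+ disc (GK.map ((↑) : ℤ → ℚ)),
        ∀ (x : Ldual (GS.map ((↑) : ℤ → ℚ))) (y : Ldual (GK.map ((↑) : ℤ → ℚ))),
          γ (dmk _ x) = dmk _ y →
            ∃ k : ℤ, pair (GK.map ((↑) : ℤ → ℚ)) y y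
              + pair (GS.map ((↑) : ℤ → ℚ)) x x = 2 * k) ↔
      (∃ N : AddSubgroup ((Fin p ⊕ Fin q) → ℚ),
        -- `N` contains `S ⊕ K`
        L0 (Fin p ⊕ Fin q) ≤ N ∧
        -- `N` is even
        (∀ x ∈ N, ∃ k : ℤ,
          pair (Matrix.fromBlocks (GS.map ((↑) : ℤ → ℚ)) 0 0 (GK.map ((↑) : ℤ → ℚ)))
            x x = 2 * k) ∧
        -- `N` is unimodular: it equals its own dual
        (∀ x, x ∈ N ↔ ∀ y ∈ N, ∃ k : ℤ,
          pair (Matrix.fromBlocks (GS.map ((↑) : ℤ → ℚ)) 0 0 (GK.map ((↑) : ℤ → ℚ)))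
            x y = (k : ℚ)) ∧
        -- `S` is primitively embedded: `N ∩ (S ⊗ ℚ) = S`
        (∀ x ∈ N, (∀ j : Fin q, x (Sum.inr j) = 0) →
          ∀ i : Fin p, ∃ k : ℤ, x (Sum.inl i) = (k : ℚ)) ∧
        -- `K` is primitively embedded: `N ∩ (K ⊗ ℚ) = K`
        (∀ x ∈ N, (∀ i : Fin p, x (Sum.inl i) = 0) →
          ∀ j : Fin q, ∃ k : ℤ, x (Sum.inr j) = (k : ℚ))) := by
  have hS := hSsym.map ((↑) : ℤ → ℚ)
  have hK := hKsym.map ((↑) : ℤ → ℚ)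
  have hSdet' := isUnit_det_map_intCast hSdet
  have hKdet' := isUnit_det_map_intCast hKdet
  constructor
  · rintro ⟨γ, hγ⟩
    exact ⟨graphLattice γ, L0_le_graphLattice (L0_le_Ldual_map GS) (L0_le_Ldual_map GK),
      graphLattice_even hγ,
      mem_graphLattice_iff_mem_dualOf hS hK hKdet' (L0_le_Ldual_map GS) (L0_le_Ldual_map GK) hγ,
      graphLattice_primitive_left, graphLattice_primitive_right⟩
  · rintro ⟨N, hL0, heven, huni, hprimS, hprimK⟩
    exact exists_discEquiv_of_unimodular hS hK hSdet' hKdet' hL0 heven huni hprimS hprimK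

/-- (Nikulin, Corollary 1.6.2.)  Let `S` and `K` be nondegenerate even lattices,
presented by symmetric Gram matrices `GS`, `GK` with nonzero determinant and even
norms.  There is a group isomorphism `γ : D_S → D_K` with `γ*q_K = −q_S`
(expressed on representatives: whenever `γ[x] = [y]`, `q_K(y) + q_S(x) ∈ 2ℤ`)
if and only if there is an even unimodular overlattice `N` of `S ⊕ K` into which
`S` and `K` are primitively embedded. -/
theorem stmt_10 (p q : ℕ)
    (GS : Matrix (Fin p) (Fin p) ℤ) (GK : Matrix (Fin q) (Fin q) ℤ)
    (hSsym : GS.IsSymm) (hKsym : GK.IsSymm)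
    (hSdet : GS.det ≠ 0) (hKdet : GK.det ≠ 0)
    (hSeven : ∀ v : Fin p → ℤ, Even (v ⬝ᵥ GS.mulVec v))
    (hKeven : ∀ v : Fin q → ℤ, Even (v ⬝ᵥ GK.mulVec v)) :
    (∃ γ : disc (GS.map ((↑) : ℤ → ℚ)) ≃+ disc (GK.map ((↑) : ℤ → ℚ)),
        ∀ (x : Ldual (GS.map ((↑) : ℤ → ℚ))) (y : Ldual (GK.map ((↑) : ℤ → ℚ))),
          γ (dmk _ x) = dmk _ y →
            ∃ k : ℤ, pair (GK.map ((↑) : ℤ → ℚ)) y y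
              + pair (GS.map ((↑) : ℤ → ℚ)) x x = 2 * k) ↔
      (∃ N : AddSubgroup ((Fin p ⊕ Fin q) → ℚ),
        -- `N` contains `S ⊕ K`
        L0 (Fin p ⊕ Fin q) ≤ N ∧
        -- `N` is even
        (∀ x ∈ N, ∃ k : ℤ,
          pair (Matrix.fromBlocks (GS.map ((↑) : ℤ → ℚ)) 0 0 (GK.map ((↑) : ℤ → ℚ)))
            x x = 2 * k) ∧
        -- `N` is unimodular: it equals its own dual
        (∀ x, x ∈ N ↔ ∀ y ∈ N, ∃ k : ℤ,
          pair (Matrix.fromBlocks (GS.map ((↑) : ℤ → ℚ)) 0 0 (GK.map ((↑) : ℤ → ℚ)))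
            x y = (k : ℚ)) ∧
        -- `S` is primitively embedded: `N ∩ (S ⊗ ℚ) = S`
        (∀ x ∈ N, (∀ j : Fin q, x (Sum.inr j) = 0) →
          ∀ i : Fin p, ∃ k : ℤ, x (Sum.inl i) = (k : ℚ)) ∧
        -- `K` is primitively embedded: `N ∩ (K ⊗ ℚ) = K`
        (∀ x ∈ N, (∀ i : Fin p, x (Sum.inl i) = 0) →
          ∀ j : Fin q, ∃ k : ℤ, x (Sum.inr j) = (k : ℚ))) :=
  stmt_10_general p q GS GK hSsym hKsym hSdet hKdet
end
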